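/- arXiv:2205.01633 — 3 statements merged into one kernel-verified Lean document; each statement's English description precedes it below -/
import Mathlib

section
/- Let n ≥ 1, ρ > 0, and ρ̄ ∈ (ρ, 2ρ]. Let f : ℝⁿ → ℝ be ρ-weakly convex and L-Lipschitz continuous (L > 0), let r : ℝⁿ → ℝ ∪ {+∞} be proper, convex and lower semicontinuous, and for μ > 0 set φ := f + r and φ_μ := f_μ + r, where f_μ is the Gaussian smoothing of f. Let x_δ ∈ ℝⁿ and suppose v_μ ∈ ℝⁿ satisfies ‖v_μ‖ ≤ δ and the generalized subgradient inequality φ_μ(y) ≥ φ_μ(x_δ) + ⟨v_μ, y − x_δ⟩ − (ρ/2)‖y − x_δ‖² for all y ∈ ℝⁿ. Let x̃ be the unique minimizer of y ↦ φ(y) + (ρ̄/2)‖y − x_δ‖². Then ρ̄²‖x_δ − x̃‖² ≤ (ρ̄²/(ρ̄−ρ)) · (δ²/(ρ̄−ρ) + 4 μ L √n), i.e., the squared gradient norm ‖∇φ^{1/ρ̄}(x_δ)‖² of the Moreau envelope of φ is bounded by (ρ̄²/(ρ̄−ρ)) (δ²/(ρ̄−ρ) + 4 μ L n^{1/2}).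 -/
open MeasureTheory ProbabilityTheory Set

/-- The standard Gaussian measure on `EuclideanSpace ℝ (Fin n)`, i.e. the `n`-fold
product of the standard real Gaussian `N(0,1)`. -/
noncomputable def stdGaussian (n : ℕ) : Measure (EuclideanSpace ℝ (Fin n)) :=
  (Measure.pi fun _ : Fin n => gaussianReal 0 1).map
    (MeasurableEquiv.toLp 2 (Fin n → ℝ))

/-- `f` is `ρ`-weakly convex. -/
def WeaklyConvex {E : Type*} [NormedAddCommGroup E] [NormedSpace ℝ E]
    (ρ : ℝ) (f : E → ℝ) : Prop :=
  ∀ x y : E, ∀ t : ℝ, t ∈ Set.Icc (0 : ℝ) 1 →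
    f (t • x + (1 - t) • y) ≤ t * f x + (1 - t) * f y + ρ / 2 * (t * (1 - t)) * ‖x - y‖ ^ 2

/-- The Gaussian smoothing `f_μ` of `f : ℝⁿ → ℝ`. -/
noncomputable def gaussianSmoothing (n : ℕ) (μ : ℝ) (f : EuclideanSpace ℝ (Fin n) → ℝ)
    (x : EuclideanSpace ℝ (Fin n)) : ℝ :=
  ∫ u, f (x + μ • u) ∂(stdGaussian n)

/-- Convexity for functions with values in `ℝ ∪ {+∞}` (modelled inside `EReal`). -/
def ERealConvexOn {E : Type*} [NormedAddCommGroup E] [NormedSpace ℝ E]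
    (r : E → EReal) : Prop :=
  ∀ x y : E, ∀ t : ℝ, t ∈ Set.Icc (0 : ℝ) 1 →
    r (t • x + (1 - t) • y) ≤ (t : EReal) * r x + ((1 - t : ℝ) : EReal) * r y

/-- The Moreau envelope of `p` with parameter `lam`. -/
noncomputable def moreauEnv {E : Type*} [NormedAddCommGroup E] [NormedSpace ℝ E]
    (p : E → EReal) (lam : ℝ) (u : E) : EReal :=
  ⨅ x, p x + ((1 / (2 * lam) * ‖x - u‖ ^ 2 : ℝ) : EReal)


namespace StdGaussianAux

open Real

lemma mom_lebesgue : ∫ x : ℝ, x ^ 2 * rexp (-(1/2) * x ^ 2) = Real.sqrt (2 * π) := by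
  have hb : (0:ℝ) < 1/2 := by norm_num
  have hi2 : Integrable fun x : ℝ => x ^ 2 * rexp (-(1/2) * x ^ 2) := by
    have := integrable_rpow_mul_exp_neg_mul_sq hb (s := 2) (by norm_num)
    convert this using 2 with x
    rw [← Real.rpow_natCast x 2]; norm_num
  have hi0 : Integrable fun x : ℝ => rexp (-(1/2) * x ^ 2) := integrable_exp_neg_mul_sq hb
  have hi1 : Integrable fun x : ℝ => -x * rexp (-(1/2) * x ^ 2) := by
    have := integrable_rpow_mul_exp_neg_mul_sq hb (s := 1) (by norm_num)
    simp only [Real.rpow_one] at this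
    simpa [neg_mul] using this.neg'
  have hderiv : ∀ x : ℝ, HasDerivAt (fun x : ℝ => -x * rexp (-(1/2) * x ^ 2))
      (x ^ 2 * rexp (-(1/2) * x ^ 2) - rexp (-(1/2) * x ^ 2)) x := by
    intro x
    have h1 : HasDerivAt (fun x : ℝ => -(1/2) * x ^ 2) (-(1/2) * (2 * x)) x := by
      simpa using ((hasDerivAt_pow 2 x).const_mul (-(1/2) : ℝ))
    have h2 := h1.exp
    have h3 : HasDerivAt (fun x : ℝ => -x) (-1) x := hasDerivAt_neg' x
    have := h3.mul h2
    exact this.congr_deriv (by ring)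
  have hz : ∫ x : ℝ, (x ^ 2 * rexp (-(1/2) * x ^ 2) - rexp (-(1/2) * x ^ 2)) = 0 :=
    integral_eq_zero_of_hasDerivAt_of_integrable hderiv (hi2.sub hi0) hi1
  rw [integral_sub hi2 hi0] at hz
  have hg : ∫ x : ℝ, rexp (-(1/2) * x ^ 2) = Real.sqrt (2 * π) := by
    rw [integral_gaussian]; congr 1; rw [div_div_eq_mul_div]; norm_num; ring
  linarith

lemma mom_gauss : ((∫ x : ℝ, x ^ 2 ∂(gaussianReal 0 1)) = 1) ∧
    Integrable (fun x : ℝ => x ^ 2) (gaussianReal 0 1) := by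
  have hne : (1 : NNReal) ≠ 0 := one_ne_zero
  have hpdf : ∀ x : ℝ, gaussianPDFReal 0 1 x = (Real.sqrt (2*π))⁻¹ * rexp (-(1/2) * x ^ 2) := by
    intro x
    simp only [gaussianPDFReal, NNReal.coe_one, mul_one, sub_zero]
    congr 1
    ring_nf
  have hmeas : Measurable fun x : ℝ => (gaussianPDFReal 0 1 x).toNNReal :=
    (measurable_gaussianPDFReal 0 1).real_toNNReal
  have hrw : gaussianReal 0 1 = volume.withDensity
      (fun x => ((gaussianPDFReal 0 1 x).toNNReal : ENNReal)) := by
    rw [gaussianReal_of_var_ne_zero 0 hne]; rfl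
  have hsmul : ∀ x : ℝ, (gaussianPDFReal 0 1 x).toNNReal • (x ^ 2)
      = (Real.sqrt (2*π))⁻¹ * (x ^ 2 * rexp (-(1/2) * x ^ 2)) := by
    intro x
    rw [NNReal.smul_def, smul_eq_mul, Real.coe_toNNReal _ (gaussianPDFReal_nonneg 0 1 x), hpdf]
    ring
  have hint : Integrable (fun x : ℝ => x ^ 2 * rexp (-(1/2) * x ^ 2)) := by
    have := integrable_rpow_mul_exp_neg_mul_sq (by norm_num : (0:ℝ) < 1/2) (s := 2) (by norm_num)
    convert this using 2 with x
    rw [← Real.rpow_natCast x 2]; norm_num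
  constructor
  · rw [hrw, integral_withDensity_eq_integral_smul hmeas]
    simp_rw [hsmul]
    rw [integral_const_mul, mom_lebesgue]
    rw [inv_mul_cancel₀]
    positivity
  · rw [hrw, integrable_withDensity_iff_integrable_smul hmeas]
    simp_rw [hsmul]
    exact hint.const_mul _

lemma map_eval (n : ℕ) (i : Fin n) :
    (Measure.pi fun _ : Fin n => gaussianReal 0 1).map (fun y => y i) = gaussianReal 0 1 := by
  ext s hs
  rw [Measure.map_apply (measurable_pi_apply i) hs]
  have : (fun y : Fin n → ℝ => y i) ⁻¹' s
      = Set.pi Set.univ (Function.update (fun _ => Set.univ) i s) := by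
    rw [← Set.eval_preimage]
  rw [this, Measure.pi_pi]
  rw [Finset.prod_eq_single i]
  · simp
  · intro j _ hj; simp [Function.update_of_ne hj]
  · simp

instance (n : ℕ) : IsProbabilityMeasure (stdGaussian n) :=
  Measure.isProbabilityMeasure_map (MeasurableEquiv.measurable _).aemeasurable

lemma coordInt (n : ℕ) (i : Fin n) :
    Integrable (fun y : Fin n → ℝ => (y i) ^ 2) (Measure.pi fun _ : Fin n => gaussianReal 0 1) ∧
    (∫ y : Fin n → ℝ, (y i) ^ 2 ∂(Measure.pi fun _ : Fin n => gaussianReal 0 1)) = 1 := by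
  have hmeas : AEMeasurable (fun y : Fin n → ℝ => y i)
      (Measure.pi fun _ : Fin n => gaussianReal 0 1) := (measurable_pi_apply i).aemeasurable
  have hsm : AEStronglyMeasurable (fun x : ℝ => x ^ 2)
      ((Measure.pi fun _ : Fin n => gaussianReal 0 1).map (fun y => y i)) :=
    (continuous_pow 2).aestronglyMeasurable
  constructor
  · exact (integrable_map_measure hsm hmeas).mp (by rw [map_eval n i]; exact mom_gauss.2)
  · calc (∫ y : Fin n → ℝ, (y i) ^ 2 ∂(Measure.pi fun _ : Fin n => gaussianReal 0 1))
        = ∫ x, x ^ 2 ∂((Measure.pi fun _ : Fin n => gaussianReal 0 1).map (fun y => y i)) :=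
          (integral_map hmeas hsm).symm
      _ = 1 := by rw [map_eval n i, mom_gauss.1]

lemma normSq (n : ℕ) :
    Integrable (fun u : EuclideanSpace ℝ (Fin n) => ‖u‖ ^ 2) (stdGaussian n) ∧
    (∫ u : EuclideanSpace ℝ (Fin n), ‖u‖ ^ 2 ∂(stdGaussian n)) = n := by
  have hnorm : ∀ u : EuclideanSpace ℝ (Fin n), ‖u‖ ^ 2 = ∑ i, (u i) ^ 2 := by
    intro u
    rw [EuclideanSpace.norm_eq, Real.sq_sqrt (by positivity)]
    simp [sq_abs]
  have hint : Integrable (fun y : Fin n → ℝ => ∑ i, (y i) ^ 2)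
      (Measure.pi fun _ : Fin n => gaussianReal 0 1) :=
    integrable_finset_sum _ (fun i _ => (coordInt n i).1)
  have hval : (∫ y : Fin n → ℝ, ∑ i, (y i) ^ 2 ∂(Measure.pi fun _ : Fin n => gaussianReal 0 1))
      = n := by
    rw [integral_finset_sum _ (fun i _ => (coordInt n i).1)]
    simp [(coordInt n _).2]
  constructor
  · rw [_root_.stdGaussian, integrable_map_equiv]
    simp_rw [hnorm]
    exact hint
  · rw [_root_.stdGaussian, integral_map_equiv]
    simp_rw [hnorm]
    exact hval

lemma normInt (n : ℕ) :
    Integrable (fun u : EuclideanSpace ℝ (Fin n) => ‖u‖) (stdGaussian n) := by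
  refine Integrable.mono' ((normSq n).1.add (integrable_const 1))
    continuous_norm.aestronglyMeasurable (ae_of_all _ fun u => ?_)
  rw [Real.norm_eq_abs, abs_of_nonneg (norm_nonneg u)]
  show ‖u‖ ≤ ‖u‖ ^ 2 + 1
  nlinarith [sq_nonneg (‖u‖ - 1), norm_nonneg u]

lemma normIntLe (n : ℕ) (hn : 1 ≤ n) :
    (∫ u : EuclideanSpace ℝ (Fin n), ‖u‖ ∂(stdGaussian n)) ≤ Real.sqrt n := by
  have hs : (0:ℝ) < Real.sqrt n :=
    Real.sqrt_pos.mpr (by exact_mod_cast Nat.pos_of_ne_zero (by omega))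
  have hsq : (Real.sqrt n) ^ 2 = n := Real.sq_sqrt (by positivity)
  have hmono : (∫ u : EuclideanSpace ℝ (Fin n), ‖u‖ ∂(stdGaussian n))
      ≤ ∫ u : EuclideanSpace ℝ (Fin n), (‖u‖ ^ 2 + n) / (2 * Real.sqrt n) ∂(stdGaussian n) := by
    refine integral_mono (normInt n) (((normSq n).1.add (integrable_const _)).div_const _) ?_
    intro u
    rw [le_div_iff₀ (by positivity)]
    nlinarith [sq_nonneg (‖u‖ - Real.sqrt n)]
  calc (∫ u : EuclideanSpace ℝ (Fin n), ‖u‖ ∂(stdGaussian n))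
      ≤ ∫ u : EuclideanSpace ℝ (Fin n), (‖u‖ ^ 2 + n) / (2 * Real.sqrt n) ∂(stdGaussian n) :=
        hmono
    _ = ((∫ u : EuclideanSpace ℝ (Fin n), ‖u‖ ^ 2 ∂(stdGaussian n)) + n) / (2 * Real.sqrt n) := by
        rw [integral_div, integral_add (normSq n).1 (integrable_const _), integral_const]
        simp
    _ = Real.sqrt n := by
        rw [(normSq n).2]
        rw [div_eq_iff (by positivity)]
        nlinarith

lemma smoothErr (n : ℕ) (hn : 1 ≤ n) (μ L : ℝ) (hμ : 0 < μ) (hL : 0 < L)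
    (f : EuclideanSpace ℝ (Fin n) → ℝ)
    (hflip : ∀ x y : EuclideanSpace ℝ (Fin n), |f x - f y| ≤ L * ‖x - y‖)
    (x : EuclideanSpace ℝ (Fin n)) :
    |gaussianSmoothing n μ f x - f x| ≤ μ * L * Real.sqrt n := by
  have hcont : Continuous f := by
    have : LipschitzWith (Real.toNNReal L) f := by
      apply LipschitzWith.of_dist_le_mul
      intro a b
      rw [Real.dist_eq, dist_eq_norm]
      calc |f a - f b| ≤ L * ‖a - b‖ := hflip a b
        _ ≤ Real.toNNReal L * ‖a - b‖ := by
            gcongr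
            exact Real.le_coe_toNNReal L
    exact this.continuous
  have hmeas : AEStronglyMeasurable (fun u : EuclideanSpace ℝ (Fin n) => f (x + μ • u))
      (stdGaussian n) :=
    (hcont.comp (by fun_prop : Continuous fun u : EuclideanSpace ℝ (Fin n) => x + μ • u)).aestronglyMeasurable
  have hptw : ∀ u : EuclideanSpace ℝ (Fin n), |f (x + μ • u) - f x| ≤ L * μ * ‖u‖ := by
    intro u
    calc |f (x + μ • u) - f x| ≤ L * ‖x + μ • u - x‖ := hflip _ _
      _ = L * μ * ‖u‖ := by
          rw [add_sub_cancel_left, norm_smul, Real.norm_eq_abs, abs_of_pos hμ]; ring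
  have hint : Integrable (fun u : EuclideanSpace ℝ (Fin n) => f (x + μ • u)) (stdGaussian n) := by
    refine Integrable.mono' (((normInt n).const_mul (L * μ)).add (integrable_const |f x|))
      hmeas (ae_of_all _ fun u => ?_)
    rw [Real.norm_eq_abs]
    have := hptw u
    calc |f (x + μ • u)| ≤ |f (x + μ • u) - f x| + |f x| := by
          have := abs_sub_abs_le_abs_sub (f (x + μ • u)) (f x)
          nlinarith [abs_abs (f (x + μ • u))]
      _ ≤ L * μ * ‖u‖ + |f x| := by linarith
  have h1 : gaussianSmoothing n μ f x - f x
      = ∫ u, (f (x + μ • u) - f x) ∂(stdGaussian n) := by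
    rw [integral_sub hint (integrable_const _), integral_const]
    simp [gaussianSmoothing]
  rw [h1]
  calc |∫ u, (f (x + μ • u) - f x) ∂(stdGaussian n)|
      ≤ ∫ u, |f (x + μ • u) - f x| ∂(stdGaussian n) := by
        simpa [Real.norm_eq_abs] using
          norm_integral_le_integral_norm (μ := stdGaussian n)
            (fun u : EuclideanSpace ℝ (Fin n) => f (x + μ • u) - f x)
    _ ≤ ∫ u, L * μ * ‖u‖ ∂(stdGaussian n) := by
        refine integral_mono (hint.sub (integrable_const _)).abs ((normInt n).const_mul _) ?_
        intro u; exact hptw u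
    _ = L * μ * ∫ u, ‖u‖ ∂(stdGaussian n) := integral_const_mul _ _
    _ ≤ L * μ * Real.sqrt n := mul_le_mul_of_nonneg_left (normIntLe n hn) (by positivity)
    _ = μ * L * Real.sqrt n := by ring

end StdGaussianAux

set_option maxHeartbeats 1000000 in
theorem stmt_0 (n : ℕ) (hn : 1 ≤ n) (ρ ρbar L μ δ : ℝ)
    (hρ : 0 < ρ) (hρbar₁ : ρ < ρbar) (hρbar₂ : ρbar ≤ 2 * ρ)
    (hL : 0 < L) (hμ : 0 < μ) (hδ : 0 ≤ δ)
    (f : EuclideanSpace ℝ (Fin n) → ℝ)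
    (hweak : WeaklyConvex ρ f)
    (hflip : ∀ x y : EuclideanSpace ℝ (Fin n), |f x - f y| ≤ L * ‖x - y‖)
    (r : EuclideanSpace ℝ (Fin n) → EReal)
    (hrbot : ∀ x, r x ≠ ⊥) (hrproper : ∃ x, r x ≠ ⊤)
    (hrconv : ERealConvexOn r) (hrlsc : LowerSemicontinuous r)
    (xδ xt vμ : EuclideanSpace ℝ (Fin n))
    (hv : ‖vμ‖ ≤ δ)
    -- generalized subgradient inequality for φ_μ = f_μ + r at x_δ
    (hsub : ∀ y : EuclideanSpace ℝ (Fin n),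
      ((gaussianSmoothing n μ f xδ : ℝ) : EReal) + r xδ +
          (((inner ℝ vμ (y - xδ) : ℝ) - ρ / 2 * ‖y - xδ‖ ^ 2 : ℝ) : EReal) ≤
        ((gaussianSmoothing n μ f y : ℝ) : EReal) + r y)
    -- x̃ is the unique minimizer of y ↦ φ(y) + (ρ̄/2)‖y − x_δ‖², where φ = f + r
    (hmin : ∀ y : EuclideanSpace ℝ (Fin n),
      ((f xt : ℝ) : EReal) + r xt + ((ρbar / 2 * ‖xt - xδ‖ ^ 2 : ℝ) : EReal) ≤
        ((f y : ℝ) : EReal) + r y + ((ρbar / 2 * ‖y - xδ‖ ^ 2 : ℝ) : EReal))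
    (huniq : ∀ y : EuclideanSpace ℝ (Fin n),
      (∀ z : EuclideanSpace ℝ (Fin n),
        ((f y : ℝ) : EReal) + r y + ((ρbar / 2 * ‖y - xδ‖ ^ 2 : ℝ) : EReal) ≤
          ((f z : ℝ) : EReal) + r z + ((ρbar / 2 * ‖z - xδ‖ ^ 2 : ℝ) : EReal)) → y = xt) :
    -- ‖∇φ^{1/ρ̄}(x_δ)‖² = ρ̄²‖x_δ − x̃‖² is bounded as stated
    ρbar ^ 2 * ‖xδ - xt‖ ^ 2 ≤
      ρbar ^ 2 / (ρbar - ρ) * (δ ^ 2 / (ρbar - ρ) + 4 * μ * L * Real.sqrt n) := by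
  obtain ⟨y0, hy0⟩ := hrproper
  have hry0 : r y0 = ((r y0).toReal : EReal) := (EReal.coe_toReal hy0 (hrbot y0)).symm
  set b0 : ℝ := (r y0).toReal
  -- r xt ≠ ⊤
  have hxtne : r xt ≠ ⊤ := by
    intro h
    have := hmin y0
    rw [h, hry0] at this
    simp only [← EReal.coe_add] at this
    rw [EReal.add_top_of_ne_bot (by exact EReal.coe_ne_bot _)] at this
    · rw [EReal.top_add_of_ne_bot (by exact EReal.coe_ne_bot _)] at this
      exact (EReal.coe_ne_top _) (top_le_iff.mp this)
  have hxδne : r xδ ≠ ⊤ := by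
    intro h
    have := hsub y0
    rw [h, hry0] at this
    simp only [← EReal.coe_add] at this
    rw [EReal.add_top_of_ne_bot (by exact EReal.coe_ne_bot _)] at this
    · rw [EReal.top_add_of_ne_bot (by exact EReal.coe_ne_bot _)] at this
      exact (EReal.coe_ne_top _) (top_le_iff.mp this)
  have hra : r xt = ((r xt).toReal : EReal) := (EReal.coe_toReal hxtne (hrbot xt)).symm
  have hrb : r xδ = ((r xδ).toReal : EReal) := (EReal.coe_toReal hxδne (hrbot xδ)).symm
  set a : ℝ := (r xt).toReal
  set b : ℝ := (r xδ).toReal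
  set d : ℝ := ‖xt - xδ‖ with hd
  have hd0 : 0 ≤ d := norm_nonneg _
  -- real form of subgradient inequality at xt
  have hC : gaussianSmoothing n μ f xδ + b + ((inner ℝ vμ (xt - xδ) : ℝ) - ρ / 2 * d ^ 2)
      ≤ gaussianSmoothing n μ f xt + a := by
    have := hsub xt
    rw [hra, hrb] at this
    simp only [← EReal.coe_add] at this
    exact EReal.coe_le_coe_iff.mp this
  -- strong minimality (real form)
  have hB : f xt + a + ρbar * d ^ 2 ≤ f xδ + b + ρ / 2 * d ^ 2 := by
    refine le_of_forall_pos_le_add fun ε hε => ?_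
    set K : ℝ := (ρbar - ρ) / 2 * d ^ 2 with hKdef
    have hK0 : 0 ≤ K := by
      have : 0 ≤ ρbar - ρ := by linarith
      positivity
    set t : ℝ := min 1 (ε / (K + 1)) with htdef
    have ht0 : 0 < t := lt_min one_pos (by positivity)
    have ht1 : t ≤ 1 := min_le_left _ _
    have htmem : t ∈ Set.Icc (0:ℝ) 1 := ⟨ht0.le, ht1⟩
    set z := t • xδ + (1 - t) • xt with hz
    -- bound on r z
    have hrzle : r z ≤ ((t * b + (1 - t) * a : ℝ) : EReal) := by
      have := hrconv xδ xt t htmem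
      rw [hra, hrb] at this
      rw [EReal.coe_add, EReal.coe_mul, EReal.coe_mul]
      exact this
    have hrzne : r z ≠ ⊤ := ne_top_of_le_ne_top (EReal.coe_ne_top _) hrzle
    have hrz : r z = ((r z).toReal : EReal) := (EReal.coe_toReal hrzne (hrbot z)).symm
    set c : ℝ := (r z).toReal
    have hc : c ≤ t * b + (1 - t) * a := by
      rw [hrz] at hrzle; exact EReal.coe_le_coe_iff.mp hrzle
    -- real form of minimality at z
    have hmz : f xt + a + ρbar / 2 * d ^ 2 ≤ f z + c + ρbar / 2 * ‖z - xδ‖ ^ 2 := by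
      have := hmin z
      rw [hra, hrz] at this
      simp only [← EReal.coe_add] at this
      exact EReal.coe_le_coe_iff.mp this
    have hzδ : z - xδ = (1 - t) • (xt - xδ) := by
      rw [hz]; module
    have hznorm : ‖z - xδ‖ ^ 2 = (1 - t) ^ 2 * d ^ 2 := by
      rw [hzδ, norm_smul, Real.norm_eq_abs, abs_of_nonneg (by linarith), mul_pow]
    have hfz : f z ≤ t * f xδ + (1 - t) * f xt + ρ / 2 * (t * (1 - t)) * d ^ 2 := by
      have := hweak xδ xt t htmem
      rwa [norm_sub_rev xδ xt, ← hd] at this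
    -- combine
    rw [hznorm] at hmz
    have hdiv : (f xt + a + ρbar * d ^ 2) - (f xδ + b + ρ / 2 * d ^ 2) ≤ t * K := by
      have h5 : f xt + a + ρbar / 2 * d ^ 2 ≤
          (t * f xδ + (1 - t) * f xt + ρ / 2 * (t * (1 - t)) * d ^ 2) + (t * b + (1 - t) * a)
            + ρbar / 2 * ((1 - t) ^ 2 * d ^ 2) := by linarith
      have h4 : t * ((f xt + a + ρbar * d ^ 2) - (f xδ + b + ρ / 2 * d ^ 2)) ≤ t * (t * K) := by
        rw [hKdef]
        nlinarith [h5]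
      exact le_of_mul_le_mul_left h4 ht0
    have htK : t * K ≤ ε := by
      have hle : t ≤ ε / (K + 1) := min_le_right _ _
      have h1 : t * (K + 1) ≤ ε := by
        rw [← le_div_iff₀ (by positivity)]
        exact hle
      nlinarith [ht0.le, hK0]
    linarith
  -- Cauchy-Schwarz
  have hCS : -(δ * d) ≤ (inner ℝ vμ (xt - xδ) : ℝ) := by
    have h1 := abs_real_inner_le_norm vμ (xt - xδ)
    have h2 : ‖vμ‖ * ‖xt - xδ‖ ≤ δ * d := by
      rw [← hd]
      exact mul_le_mul_of_nonneg_right hv hd0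
    have := (abs_le.mp (h1.trans h2)).1
    linarith
  -- smoothing errors
  have hS1 := StdGaussianAux.smoothErr n hn μ L hμ hL f hflip xt
  have hS2 := StdGaussianAux.smoothErr n hn μ L hμ hL f hflip xδ
  have hS1' := abs_le.mp hS1
  have hS2' := abs_le.mp hS2
  set M : ℝ := μ * L * Real.sqrt n with hM
  have hM0 : 0 ≤ M := by positivity
  set s : ℝ := ρbar - ρ with hs
  have hs0 : 0 < s := by linarith
  have hK : s * d ^ 2 ≤ δ * d + 2 * M := by
    nlinarith [hB, hC, hCS, hS1'.1, hS1'.2, hS2'.1, hS2'.2]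
  have hkey : s ^ 2 * d ^ 2 ≤ δ ^ 2 + 4 * s * M := by
    nlinarith [sq_nonneg (s * d - δ), hK, hs0, hd0]
  have hR : ρbar ^ 2 / s * (δ ^ 2 / s + 4 * μ * L * Real.sqrt n)
      = ρbar ^ 2 * (δ ^ 2 + 4 * s * M) / s ^ 2 := by
    field_simp
    ring
  rw [norm_sub_rev, ← hd, hR, le_div_iff₀ (by positivity)]
  nlinarith [mul_le_mul_of_nonneg_left hkey (sq_nonneg ρbar)]
end

section
/- Let n ≥ 1, ρ > 0, and ρ̄ ∈ (ρ, 2ρ]. Let f : ℝⁿ → ℝ be ρ-weakly convex and L-Lipschitz continuous (L > 0), let r : ℝⁿ → ℝ ∪ {+∞} be proper, convex and lower semicontinuous, and for μ > 0 set φ := f + r and φ_μ := f_μ + r, where f_μ is the Gaussian smoothing of f. Let x ∈ ℝⁿ, let x̃ be the unique minimizer of y ↦ φ(y) + (ρ̄/2)‖y − x‖², and suppose v_μ ∈ ℝⁿ satisfies the generalized subgradient inequality φ_μ(y) ≥ φ_μ(x) + ⟨v_μ, y − x⟩ − (ρ/2)‖y − x‖² for all y ∈ ℝⁿ. Then ⟨x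 − x̃, v_μ⟩ ≥ ((ρ̄−ρ)/ρ̄²)‖ρ̄(x − x̃)‖² − 2 μ L √n, i.e., ⟨x − x̃, v_μ⟩ ≥ ((ρ̄−ρ)/ρ̄²)‖∇φ^{1/ρ̄}(x)‖² − 2 μ L n^{1/2}. -/
open MeasureTheory ProbabilityTheory Set

section AuxGauss
open Real Filter
open scoped ENNReal NNReal

lemma integrable_sq_exp : Integrable (fun x : ℝ => x ^ 2 * Real.exp (-(1/2 : ℝ) * x ^ 2)) := by
  have := integrable_rpow_mul_exp_neg_mul_sq (b := 1/2) (by norm_num) (s := 2) (by norm_num)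
  simpa [Real.rpow_natCast] using this

lemma integral_sq_exp : ∫ x : ℝ, x ^ 2 * Real.exp (-(1/2 : ℝ) * x ^ 2) = Real.sqrt (2 * π) := by
  have hu : ∀ x : ℝ, HasDerivAt (fun x : ℝ => x) 1 x := fun x => hasDerivAt_id x
  have hv : ∀ x : ℝ, HasDerivAt (fun x : ℝ => -Real.exp (-(1/2 : ℝ) * x ^ 2))
      (x * Real.exp (-(1/2 : ℝ) * x ^ 2)) x := by
    intro x
    have h1 : HasDerivAt (fun x : ℝ => -(1/2 : ℝ) * x ^ 2) (-(1/2:ℝ) * (2 * x)) x := by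
      simpa using ((hasDerivAt_pow 2 x).const_mul (-(1/2:ℝ)))
    have := (h1.exp).neg
    exact this.congr_deriv (by ring)
  have huv' : Integrable ((fun x : ℝ => x) * fun x => x * Real.exp (-(1/2 : ℝ) * x ^ 2)) := by
    simpa [Pi.mul_def, mul_assoc, pow_two] using integrable_sq_exp
  have hu'v : Integrable ((fun _ : ℝ => (1:ℝ)) * fun x => -Real.exp (-(1/2 : ℝ) * x ^ 2)) := by
    rw [show ((fun _ : ℝ => (1:ℝ)) * fun x => -Real.exp (-(1/2 : ℝ) * x ^ 2))
        = fun x : ℝ => -Real.exp (-(1/2 : ℝ) * x ^ 2) from by ext x; simp]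
    exact (integrable_exp_neg_mul_sq (b := 1/2) (by norm_num)).neg
  have huv : Integrable ((fun x : ℝ => x) * fun x => -Real.exp (-(1/2 : ℝ) * x ^ 2)) := by
    rw [show ((fun x : ℝ => x) * fun x => -Real.exp (-(1/2 : ℝ) * x ^ 2))
        = fun x : ℝ => -(x * Real.exp (-(1/2 : ℝ) * x ^ 2)) from by ext x; simp]
    exact (integrable_mul_exp_neg_mul_sq (b := 1/2) (by norm_num)).neg
  have key := integral_mul_deriv_eq_deriv_mul_of_integrable (fun x _ => hu x) (fun x _ => hv x) huv' hu'v huv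
  have h2 : ∫ x : ℝ, x * (x * Real.exp (-(1/2 : ℝ) * x ^ 2)) =
      ∫ x : ℝ, x ^ 2 * Real.exp (-(1/2 : ℝ) * x ^ 2) := by
    congr 1; ext x; ring
  rw [h2] at key
  rw [key]
  have : ∫ x : ℝ, (1:ℝ) * -Real.exp (-(1/2 : ℝ) * x ^ 2) = -Real.sqrt (2*π) := by
    rw [show (fun x : ℝ => (1:ℝ) * -Real.exp (-(1/2:ℝ) * x ^ 2)) = fun x => -Real.exp (-(1/2:ℝ)*x^2) by ext x; ring]
    rw [integral_neg]
    have := integral_gaussian (1/2 : ℝ)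
    rw [this, show π / (1/2 : ℝ) = 2 * π from by ring]
  rw [this]; ring

lemma gaussPDF_smul_sq (x : ℝ) :
    gaussianPDFReal 0 1 x * x ^ 2 = (Real.sqrt (2*π))⁻¹ * (x ^ 2 * Real.exp (-(1/2:ℝ) * x ^ 2)) := by
  simp only [gaussianPDFReal]
  push_cast
  rw [show (2 * π * (1:ℝ)) = 2 * π by ring, show (-(x - 0)^2/(2*(1:ℝ))) = -(1/2) * x^2 by ring]
  ring

lemma integrable_sq_gauss : Integrable (fun x : ℝ => x ^ 2) (gaussianReal 0 1) := by
  rw [gaussianReal_of_var_ne_zero 0 one_ne_zero, gaussianPDF_def]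
  have hmeas : Measurable (fun x : ℝ => (gaussianPDFReal 0 1 x).toNNReal) :=
    (measurable_gaussianPDFReal 0 1).real_toNNReal
  rw [show (fun x : ℝ => ENNReal.ofReal (gaussianPDFReal 0 1 x))
      = fun x : ℝ => ((gaussianPDFReal 0 1 x).toNNReal : ℝ≥0∞) from rfl]
  rw [integrable_withDensity_iff_integrable_smul hmeas]
  have : (fun x : ℝ => ((gaussianPDFReal 0 1 x).toNNReal : ℝ) • (x^2 : ℝ))
      = fun x : ℝ => (Real.sqrt (2*π))⁻¹ * (x ^ 2 * Real.exp (-(1/2:ℝ) * x ^ 2)) := by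
    ext x
    rw [smul_eq_mul, Real.coe_toNNReal _ (gaussianPDFReal_nonneg 0 1 x), gaussPDF_smul_sq]
  rw [show (fun x : ℝ => ((gaussianPDFReal 0 1 x).toNNReal : ℝ≥0) • (x^2 : ℝ)) =
    fun x : ℝ => (Real.sqrt (2*π))⁻¹ * (x ^ 2 * Real.exp (-(1/2:ℝ) * x ^ 2)) from this]
  exact integrable_sq_exp.const_mul _

lemma integral_sq_gauss : ∫ x : ℝ, x ^ 2 ∂(gaussianReal 0 1) = 1 := by
  rw [gaussianReal_of_var_ne_zero 0 one_ne_zero, gaussianPDF_def]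
  have hmeas : Measurable (fun x : ℝ => (gaussianPDFReal 0 1 x).toNNReal) :=
    (measurable_gaussianPDFReal 0 1).real_toNNReal
  rw [show (fun x : ℝ => ENNReal.ofReal (gaussianPDFReal 0 1 x))
      = fun x : ℝ => ((gaussianPDFReal 0 1 x).toNNReal : ℝ≥0∞) from rfl]
  rw [integral_withDensity_eq_integral_smul hmeas]
  have : (fun x : ℝ => ((gaussianPDFReal 0 1 x).toNNReal : ℝ≥0) • (x^2 : ℝ))
      = fun x : ℝ => (Real.sqrt (2*π))⁻¹ * (x ^ 2 * Real.exp (-(1/2:ℝ) * x ^ 2)) := by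
    ext x
    rw [NNReal.smul_def, smul_eq_mul, Real.coe_toNNReal _ (gaussianPDFReal_nonneg 0 1 x),
      gaussPDF_smul_sq]
  rw [this, integral_const_mul, integral_sq_exp,
    inv_mul_cancel₀ (Real.sqrt_ne_zero'.mpr (by positivity))]

instance stdGaussian_prob (n : ℕ) : IsProbabilityMeasure (stdGaussian n) :=
  Measure.isProbabilityMeasure_map (MeasurableEquiv.toLp 2 (Fin n → ℝ)).measurable.aemeasurable

lemma pi_map_eval {n : ℕ} (i : Fin n) :
    (Measure.pi fun _ : Fin n => gaussianReal 0 1).map (Function.eval i) = gaussianReal 0 1 := by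
  apply Measure.ext
  intro s hs
  rw [Measure.map_apply (measurable_pi_apply i) hs, Set.eval_preimage, Measure.pi_pi]
  rw [Finset.prod_eq_single i]
  · simp
  · intro j _ hj
    simp [Function.update_of_ne hj]
  · simp

lemma integral_eval_sq {n : ℕ} (i : Fin n) :
    Integrable (fun y : Fin n → ℝ => (y i) ^ 2) (Measure.pi fun _ : Fin n => gaussianReal 0 1)
    ∧ ∫ y : Fin n → ℝ, (y i) ^ 2 ∂(Measure.pi fun _ : Fin n => gaussianReal 0 1) = 1 := by
  have hmap := pi_map_eval i
  constructor
  all_goals {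
    have hg : AEStronglyMeasurable (fun t : ℝ => t ^ 2)
        ((Measure.pi fun _ : Fin n => gaussianReal 0 1).map (Function.eval i)) := by
      rw [hmap]; fun_prop
    first
    | · exact (integrable_map_measure hg (measurable_pi_apply i).aemeasurable).mp
          (by rw [hmap]; exact integrable_sq_gauss)
    | · have h2 := integral_map (μ := Measure.pi fun _ : Fin n => gaussianReal 0 1)
          (φ := Function.eval i) (f := fun t : ℝ => t ^ 2)
          (measurable_pi_apply i).aemeasurable hg
        rw [hmap] at h2
        rw [← h2]
        exact integral_sq_gauss }

lemma norm_equiv_symm_sq {n : ℕ} (y : Fin n → ℝ) :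
    ‖(MeasurableEquiv.toLp 2 (Fin n → ℝ)) y‖ ^ 2 = ∑ i, (y i) ^ 2 := by
  rw [EuclideanSpace.norm_eq]
  rw [Real.sq_sqrt (by positivity)]
  apply Finset.sum_congr rfl
  intro i _
  simp [MeasurableEquiv.coe_toLp, Real.norm_eq_abs, sq_abs]

lemma integrable_normsq_stdGaussian (n : ℕ) :
    Integrable (fun u : EuclideanSpace ℝ (Fin n) => ‖u‖ ^ 2) (stdGaussian n) := by
  rw [_root_.stdGaussian, integrable_map_equiv]
  have : ((fun u : EuclideanSpace ℝ (Fin n) => ‖u‖ ^ 2) ∘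
      (MeasurableEquiv.toLp 2 (Fin n → ℝ))) = fun y : Fin n → ℝ => ∑ i, (y i) ^ 2 := by
    ext y; exact norm_equiv_symm_sq y
  rw [this]
  exact integrable_finset_sum _ (fun i _ => (integral_eval_sq i).1)

lemma integral_normsq_stdGaussian (n : ℕ) :
    ∫ u : EuclideanSpace ℝ (Fin n), ‖u‖ ^ 2 ∂(stdGaussian n) = n := by
  rw [_root_.stdGaussian, integral_map_equiv]
  have : ∀ y : Fin n → ℝ, ‖(MeasurableEquiv.toLp 2 (Fin n → ℝ)) y‖ ^ 2
      = ∑ i, (y i) ^ 2 := norm_equiv_symm_sq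
  rw [integral_congr_ae (Filter.Eventually.of_forall this)]
  rw [integral_finset_sum _ (fun i _ => (integral_eval_sq i).1)]
  simp [(fun i : Fin n => (integral_eval_sq i).2)]

lemma integrable_norm_stdGaussian (n : ℕ) :
    Integrable (fun u : EuclideanSpace ℝ (Fin n) => ‖u‖) (stdGaussian n) := by
  apply Integrable.mono' ((integrable_const (1:ℝ)).add (integrable_normsq_stdGaussian n))
  · exact continuous_norm.aestronglyMeasurable
  · refine Filter.Eventually.of_forall fun u => ?_
    simp only [Pi.add_apply, Real.norm_eq_abs, abs_of_nonneg (norm_nonneg u)]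
    nlinarith [norm_nonneg u, sq_nonneg (‖u‖ - 1)]

lemma integral_norm_stdGaussian_le (n : ℕ) :
    ∫ u : EuclideanSpace ℝ (Fin n), ‖u‖ ∂(stdGaussian n) ≤ Real.sqrt n := by
  have hmem : MemLp (fun u : EuclideanSpace ℝ (Fin n) => ‖u‖) 2 (stdGaussian n) := by
    rw [memLp_two_iff_integrable_sq continuous_norm.aestronglyMeasurable]
    exact integrable_normsq_stdGaussian n
  have hvar := variance_nonneg (fun u : EuclideanSpace ℝ (Fin n) => ‖u‖) (stdGaussian n)
  rw [variance_eq_sub hmem] at hvar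
  have h2 : ∫ u : EuclideanSpace ℝ (Fin n), ‖u‖ ^ 2 ∂(stdGaussian n) = n :=
    integral_normsq_stdGaussian n
  rw [Real.le_sqrt (integral_nonneg fun u => norm_nonneg u) (Nat.cast_nonneg n)]
  simp only [Pi.pow_apply] at hvar
  linarith [hvar, h2.le, h2.ge]

lemma gaussianSmoothing_sub_le {n : ℕ} {μ L : ℝ} (hμ : 0 < μ) (hL : 0 < L)
    {f : EuclideanSpace ℝ (Fin n) → ℝ}
    (hflip : ∀ x y : EuclideanSpace ℝ (Fin n), |f x - f y| ≤ L * ‖x - y‖)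
    (z : EuclideanSpace ℝ (Fin n)) :
    |gaussianSmoothing n μ f z - f z| ≤ μ * L * Real.sqrt n := by
  have hcont : Continuous f := by
    rw [Metric.continuous_iff]
    intro b ε hε
    refine ⟨ε / L, by positivity, fun a hab => ?_⟩
    calc dist (f a) (f b) = |f a - f b| := Real.dist_eq _ _
      _ ≤ L * ‖a - b‖ := hflip a b
      _ < L * (ε / L) := by
          apply mul_lt_mul_of_pos_left _ hL
          rwa [← dist_eq_norm]
      _ = ε := by field_simp
  have hbd : ∀ u : EuclideanSpace ℝ (Fin n), |f (z + μ • u) - f z| ≤ L * μ * ‖u‖ := by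
    intro u
    calc |f (z + μ • u) - f z| ≤ L * ‖z + μ • u - z‖ := hflip _ _
      _ = L * (μ * ‖u‖) := by
          rw [add_sub_cancel_left, norm_smul, Real.norm_eq_abs, abs_of_pos hμ]
      _ = L * μ * ‖u‖ := by ring
  have hint : Integrable (fun u : EuclideanSpace ℝ (Fin n) => f (z + μ • u)) (stdGaussian n) := by
    apply Integrable.mono'
      ((integrable_const (|f z|)).add ((integrable_norm_stdGaussian n).const_mul (L * μ)))
    · exact (hcont.comp (continuous_const.add ((continuous_const : Continuous fun _ : EuclideanSpace ℝ (Fin n) => μ).smul continuous_id))).aestronglyMeasurable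
    · refine Filter.Eventually.of_forall fun u => ?_
      simp only [Pi.add_apply, Real.norm_eq_abs]
      have := hbd u
      have habs : |f (z + μ • u)| - |f z| ≤ |f (z + μ • u) - f z| := by
        exact abs_sub_abs_le_abs_sub _ _
      linarith
  have hdiff : gaussianSmoothing n μ f z - f z
      = ∫ u, (f (z + μ • u) - f z) ∂(stdGaussian n) := by
    rw [integral_sub hint (integrable_const _), integral_const]
    simp [gaussianSmoothing]
  rw [hdiff]
  calc |∫ u, (f (z + μ • u) - f z) ∂(stdGaussian n)|
      ≤ ∫ u, |f (z + μ • u) - f z| ∂(stdGaussian n) := by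
        simpa [Real.norm_eq_abs] using
          norm_integral_le_integral_norm (μ := stdGaussian n)
            (fun u : EuclideanSpace ℝ (Fin n) => f (z + μ • u) - f z)
    _ ≤ ∫ u, L * μ * ‖u‖ ∂(stdGaussian n) := by
        apply integral_mono_of_nonneg (Filter.Eventually.of_forall fun u => abs_nonneg _)
          ((integrable_norm_stdGaussian n).const_mul (L * μ))
          (Filter.Eventually.of_forall hbd)
    _ = L * μ * ∫ u, ‖u‖ ∂(stdGaussian n) := integral_const_mul _ _
    _ ≤ L * μ * Real.sqrt n := by
        apply mul_le_mul_of_nonneg_left (integral_norm_stdGaussian_le n) (by positivity)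
    _ = μ * L * Real.sqrt n := by ring

end AuxGauss

set_option maxHeartbeats 1000000 in
theorem stmt_1 (n : ℕ) (hn : 1 ≤ n) (ρ ρbar L μ : ℝ)
    (hρ : 0 < ρ) (hρbar₁ : ρ < ρbar) (hρbar₂ : ρbar ≤ 2 * ρ)
    (hL : 0 < L) (hμ : 0 < μ)
    (f : EuclideanSpace ℝ (Fin n) → ℝ)
    (hweak : WeaklyConvex ρ f)
    (hflip : ∀ x y : EuclideanSpace ℝ (Fin n), |f x - f y| ≤ L * ‖x - y‖)
    (r : EuclideanSpace ℝ (Fin n) → EReal)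
    (hrbot : ∀ x, r x ≠ ⊥) (hrproper : ∃ x, r x ≠ ⊤)
    (hrconv : ERealConvexOn r) (hrlsc : LowerSemicontinuous r)
    (x xt vμ : EuclideanSpace ℝ (Fin n))
    -- x̃ is the unique minimizer of y ↦ φ(y) + (ρ̄/2)‖y − x‖², where φ = f + r
    (hmin : ∀ y : EuclideanSpace ℝ (Fin n),
      ((f xt : ℝ) : EReal) + r xt + ((ρbar / 2 * ‖xt - x‖ ^ 2 : ℝ) : EReal) ≤
        ((f y : ℝ) : EReal) + r y + ((ρbar / 2 * ‖y - x‖ ^ 2 : ℝ) : EReal))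
    (huniq : ∀ y : EuclideanSpace ℝ (Fin n),
      (∀ z : EuclideanSpace ℝ (Fin n),
        ((f y : ℝ) : EReal) + r y + ((ρbar / 2 * ‖y - x‖ ^ 2 : ℝ) : EReal) ≤
          ((f z : ℝ) : EReal) + r z + ((ρbar / 2 * ‖z - x‖ ^ 2 : ℝ) : EReal)) → y = xt)
    -- generalized subgradient inequality for φ_μ = f_μ + r at x
    (hsub : ∀ y : EuclideanSpace ℝ (Fin n),
      ((gaussianSmoothing n μ f x : ℝ) : EReal) + r x +
          (((inner ℝ vμ (y - x) : ℝ) - ρ / 2 * ‖y - x‖ ^ 2 : ℝ) : EReal) ≤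
        ((gaussianSmoothing n μ f y : ℝ) : EReal) + r y) :
    -- ⟨x − x̃, v_μ⟩ ≥ ((ρ̄−ρ)/ρ̄²)‖∇φ^{1/ρ̄}(x)‖² − 2μL√n, with ∇φ^{1/ρ̄}(x) = ρ̄(x − x̃)
    (inner ℝ (x - xt) vμ : ℝ) ≥
      (ρbar - ρ) / ρbar ^ 2 * ‖ρbar • (x - xt)‖ ^ 2 - 2 * μ * L * Real.sqrt n := by
  
  have hgS : ∀ z : EuclideanSpace ℝ (Fin n), |gaussianSmoothing n μ f z - f z| ≤ μ * L * Real.sqrt n :=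
    gaussianSmoothing_sub_le hμ hL hflip
  set gS : EuclideanSpace ℝ (Fin n) → ℝ := gaussianSmoothing n μ f with hgSdef
  have hweak' : ∀ x y : EuclideanSpace ℝ (Fin n), ∀ t : ℝ, t ∈ Set.Icc (0 : ℝ) 1 →
      f (t • x + (1 - t) • y) ≤ t * f x + (1 - t) * f y + ρ / 2 * (t * (1 - t)) * ‖x - y‖ ^ 2 := hweak
  have hrconv' : ∀ x y : EuclideanSpace ℝ (Fin n), ∀ t : ℝ, t ∈ Set.Icc (0 : ℝ) 1 →
      r (t • x + (1 - t) • y) ≤ (t : EReal) * r x + ((1 - t : ℝ) : EReal) * r y := hrconv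
  clear hweak hrconv huniq hrlsc
  rename' hweak' => hweak, hrconv' => hrconv

  obtain ⟨z, hz⟩ := hrproper
  obtain ⟨c, hc⟩ : ∃ c : ℝ, r z = (c : EReal) := ⟨(r z).toReal, (EReal.coe_toReal hz (hrbot z)).symm⟩
  -- r x is finite
  have hrx_top : r x ≠ ⊤ := by
    intro h
    have hs := hsub z
    rw [h, hc] at hs
    simp only [EReal.coe_add_top, EReal.top_add_coe, top_le_iff] at hs
    rw [← EReal.coe_add] at hs
    exact EReal.coe_ne_top _ hs
  have hrxt_top : r xt ≠ ⊤ := by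
    intro h
    have hm := hmin z
    rw [h, hc] at hm
    simp only [EReal.coe_add_top, EReal.top_add_coe, top_le_iff] at hm
    rw [← EReal.coe_add, ← EReal.coe_add] at hm
    exact EReal.coe_ne_top _ hm
  obtain ⟨a, ha⟩ : ∃ a : ℝ, r x = (a : EReal) :=
    ⟨(r x).toReal, (EReal.coe_toReal hrx_top (hrbot x)).symm⟩
  obtain ⟨b, hb⟩ : ∃ b : ℝ, r xt = (b : EReal) :=
    ⟨(r xt).toReal, (EReal.coe_toReal hrxt_top (hrbot xt)).symm⟩
  set D : ℝ := ‖xt - x‖ ^ 2 with hD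
  set I : ℝ := (inner ℝ vμ (xt - x) : ℝ) with hI
  -- real inequality from hsub at xt
  have h1 : gS x + a + (I - ρ / 2 * D) ≤ gS xt + b := by
    have hs := hsub xt
    rw [ha, hb] at hs
    exact_mod_cast hs
  -- per-t inequality
  have h3 : ∀ t : ℝ, t ∈ Set.Ioc (0:ℝ) 1 →
      f xt + b + ρbar / 2 * (2 - t) * D ≤ f x + a + ρ / 2 * (1 - t) * D := by
    intro t ⟨ht0, ht1⟩
    set yt : EuclideanSpace ℝ (Fin n) := t • x + (1 - t) • xt with hyt
    have hytx : yt - x = (1 - t) • (xt - x) := by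
      rw [hyt]; module
    have hnyt : ‖yt - x‖ ^ 2 = (1 - t) ^ 2 * D := by
      rw [hytx, norm_smul, Real.norm_eq_abs, mul_pow, sq_abs, hD]
    have hrc := hrconv x xt t ⟨ht0.le, ht1⟩
    rw [ha, hb] at hrc
    have hrc' : r yt ≤ ((t * a + (1 - t) * b : ℝ) : EReal) := by push_cast; exact hrc
    have hyt_top : r yt ≠ ⊤ := fun h => by
      rw [h] at hrc'; exact EReal.coe_ne_top _ (top_le_iff.mp hrc')
    obtain ⟨ct, hct⟩ : ∃ ct : ℝ, r yt = (ct : EReal) :=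
      ⟨(r yt).toReal, (EReal.coe_toReal hyt_top (hrbot yt)).symm⟩
    have hctle : ct ≤ t * a + (1 - t) * b := by
      rw [hct] at hrc'; exact_mod_cast hrc'
    have hm : f xt + b + ρbar / 2 * ‖xt - x‖ ^ 2 ≤ f yt + ct + ρbar / 2 * ‖yt - x‖ ^ 2 := by
      have := hmin yt
      rw [hb, hct] at this
      exact_mod_cast this
    have hw : f yt ≤ t * f x + (1 - t) * f xt + ρ / 2 * (t * (1 - t)) * ‖x - xt‖ ^ 2 :=
      hweak x xt t ⟨ht0.le, ht1⟩
    rw [norm_sub_rev, ← hD] at hw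
    rw [hnyt, ← hD] at hm
    -- combine: t*(f xt + b) + ρbar/2*(1-(1-t)^2)*D ≤ t*(f x + a) + ρ/2*t*(1-t)*D
    have hcomb : t * (f xt + b) + ρbar / 2 * (t * (2 - t)) * D
        ≤ t * (f x + a) + ρ / 2 * (t * (1 - t)) * D := by nlinarith
    have ht0' : 0 < t := ht0
    nlinarith [mul_pos ht0' ht0']
  -- Gaussian bounds
  have hg1 := hgS x
  have hg2 := hgS xt
  rw [abs_le] at hg1 hg2
  -- final bound for each t
  have hfinal : ∀ t : ℝ, t ∈ Set.Ioc (0:ℝ) 1 →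
      I - (2 * μ * L * Real.sqrt n - (ρbar - ρ) * D) ≤ (ρbar - ρ) * D / 2 * t := by
    intro t ht
    have := h3 t ht
    nlinarith [this, h1, hg1.1, hg1.2, hg2.1, hg2.2]
  have hc0 : I - (2 * μ * L * Real.sqrt n - (ρbar - ρ) * D) ≤ 0 := by
    by_contra hpos
    push_neg at hpos
    set c := I - (2 * μ * L * Real.sqrt n - (ρbar - ρ) * D) with hcdef
    set M := (ρbar - ρ) * D / 2 with hM
    rcases le_or_gt M 0 with hM0 | hM0
    · have := hfinal 1 ⟨one_pos, le_refl 1⟩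
      nlinarith
    · have hMne : M ≠ 0 := ne_of_gt hM0
      have htmem : min 1 (c / (2 * M)) ∈ Set.Ioc (0:ℝ) 1 :=
        ⟨lt_min one_pos (div_pos hpos (by linarith)), min_le_left _ _⟩
      have h4 := hfinal _ htmem
      have hle : M * min 1 (c / (2 * M)) ≤ M * (c / (2 * M)) :=
        mul_le_mul_of_nonneg_left (min_le_right _ _) hM0.le
      have h2M : M * (c / (2 * M)) = c / 2 := by
        field_simp
      rw [h2M] at hle
      nlinarith [h4, hle]
  -- conclude
  have hinner : (inner ℝ (x - xt) vμ : ℝ) = -I := by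
    rw [hI, real_inner_comm]
    rw [show x - xt = -(xt - x) from by abel, inner_neg_right]
  have hnorm : ‖ρbar • (x - xt)‖ ^ 2 = ρbar ^ 2 * D := by
    rw [norm_smul, Real.norm_eq_abs, mul_pow, sq_abs, norm_sub_rev, ← hD]
  rw [hinner, hnorm]
  have hρbar0 : ρbar ≠ 0 := ne_of_gt (lt_trans hρ hρbar₁)
  rw [show (ρbar - ρ) / ρbar ^ 2 * (ρbar ^ 2 * D) = (ρbar - ρ) * D from by field_simp]
  linarith
end

section
/- Let n ≥ 1, ρ > 0, L > 0, Δ > 0, T ∈ ℕ, and m ∈ ℝ. Set α := (1/2) · min{ 1/ρ, √(Δ/((n² + 2n) ρ L² (T+1))) }. Let (a_t)_{t=0}^{T+1} and (g_t)_{t=0}^{T} be real sequences with g_t ≥ 0, a_t ≥ m for all t, a_0 − m ≤ Δ, and suppose that for every t ∈ {0, …, T}: a_{t+1} ≤ a_t − (α/2) g_t + 4(n² + 2n) ρ α² L². Then (1/(T+1)) Σ_{t=0}^{T} g_t ≤ 8 · max{ Δρ/(T+1), L √(Δ ρ n (n+2)/(T+1)) }. -/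
theorem stmt_5 (n : ℕ) (hn : 1 ≤ n) (ρ L Δ : ℝ) (T : ℕ) (m : ℝ)
    (hρ : 0 < ρ) (hL : 0 < L) (hΔ : 0 < Δ)
    (α : ℝ)
    (hα : α = (1 / 2) * min (1 / ρ)
      (Real.sqrt (Δ / (((n : ℝ) ^ 2 + 2 * n) * ρ * L ^ 2 * (T + 1)))))
    (a g : ℕ → ℝ)
    (hg : ∀ t ≤ T, 0 ≤ g t)
    (ha : ∀ t ≤ T + 1, m ≤ a t)
    (ha0 : a 0 - m ≤ Δ)
    (hrec : ∀ t ≤ T,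
      a (t + 1) ≤ a t - (α / 2) * g t + 4 * ((n : ℝ) ^ 2 + 2 * n) * ρ * α ^ 2 * L ^ 2) :
    (1 / (T + 1)) * ∑ t ∈ Finset.range (T + 1), g t ≤
      8 * max (Δ * ρ / (T + 1)) (L * Real.sqrt (Δ * ρ * n * (n + 2) / (T + 1))) := by
  have hn1 : (1:ℝ) ≤ (n:ℝ) := by exact_mod_cast hn
  set K : ℝ := (n:ℝ)^2 + 2*n with hKdef
  have hK : 0 < K := by nlinarith
  set T1 : ℝ := (T:ℝ) + 1 with hT1def
  have hT1 : (0:ℝ) < T1 := by positivity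
  have harg : 0 < Δ / (K * ρ * L^2 * T1) := by positivity
  set s : ℝ := Real.sqrt (Δ / (K * ρ * L^2 * T1)) with hsdef
  have hs : 0 < s := Real.sqrt_pos.mpr harg
  have hs2 : s^2 = Δ / (K * ρ * L^2 * T1) := Real.sq_sqrt harg.le
  have hmin : 0 < min (1/ρ) s := lt_min (by positivity) hs
  have hα0 : 0 < α := by rw [hα]; positivity
  have hαs : α ≤ s / 2 := by
    rw [hα]
    have := min_le_right (1/ρ) s
    linarith
  -- rewrite the sqrt argument in the goal
  have hargeq : Δ * ρ * (n:ℝ) * ((n:ℝ) + 2) / T1 = Δ * ρ * K / T1 := by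
    rw [hKdef]; ring
  rw [hargeq]
  set B : ℝ := L * Real.sqrt (Δ * ρ * K / T1) with hBdef
  have hB0 : 0 ≤ B := by positivity
  have hB2 : B^2 = L^2 * (Δ * ρ * K / T1) := by
    rw [hBdef, mul_pow, Real.sq_sqrt (by positivity)]
  -- key square identities
  have hA : (K*ρ*L^2*s)^2 = B^2 := by
    have h1 : (K*ρ*L^2*s)^2 = (K*ρ*L^2)^2 * s^2 := by ring
    rw [h1, hs2, hB2]
    field_simp
  have hAle : K*ρ*L^2*s ≤ B := by
    have hx0 : 0 ≤ K*ρ*L^2*s := by positivity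
    have : K*ρ*L^2*s = B := by
      rw [← Real.sqrt_sq hx0, hA, Real.sqrt_sq hB0]
    linarith
  have hDeq : (B*T1*s)^2 = Δ^2 := by
    have h1 : (B*T1*s)^2 = B^2 * T1^2 * s^2 := by ring
    rw [h1, hB2, hs2]
    field_simp
  have hD : Δ ≤ B*T1*s := by
    have hx0 : 0 ≤ B*T1*s := by positivity
    have : B*T1*s = Δ := by
      rw [← Real.sqrt_sq hx0, hDeq, Real.sqrt_sq hΔ.le]
    linarith
  -- telescoping
  have key : ∀ t, t ≤ T + 1 →
      a t ≤ a 0 - ∑ i ∈ Finset.range t, ((α/2) * g i - 4*K*ρ*α^2*L^2) := by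
    intro t
    induction t with
    | zero => intro _; simp
    | succ k ih =>
      intro hk
      have hkT : k ≤ T := Nat.lt_succ_iff.mp hk
      have h1 := hrec k hkT
      have h2 := ih (Nat.le_succ_of_le hkT)
      rw [Finset.sum_range_succ]
      linarith
  set S : ℝ := ∑ t ∈ Finset.range (T+1), g t with hSdef
  have hsum : (α/2) * S ≤ Δ + T1 * (4*K*ρ*α^2*L^2) := by
    have h1 := key (T+1) le_rfl
    have h2 := ha (T+1) le_rfl
    have h3 : ∑ i ∈ Finset.range (T+1), ((α/2)*g i - 4*K*ρ*α^2*L^2)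
        = (α/2) * S - T1 * (4*K*ρ*α^2*L^2) := by
      rw [Finset.sum_sub_distrib, hSdef, Finset.mul_sum, Finset.sum_const,
        Finset.card_range]
      push_cast [hT1def]
      ring
    rw [h3] at h1
    linarith
  set M : ℝ := max (Δ * ρ / T1) B with hMdef
  have hM1 : Δ * ρ / T1 ≤ M := le_max_left _ _
  have hM2 : B ≤ M := le_max_right _ _
  have hM0 : 0 ≤ M := le_trans hB0 hM2
  -- Δ ≤ 2 α M T1
  have hΔle : Δ ≤ 2 * α * M * T1 := by
    rcases min_cases (1/ρ) s with ⟨hmeq, hle⟩ | ⟨hmeq, hle⟩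
    · -- min = 1/ρ
      have h2α : 2 * α = 1/ρ := by rw [hα, hmeq]; ring
      have : Δ * ρ ≤ M * T1 := by
        rw [div_le_iff₀ hT1] at hM1
        linarith
      rw [h2α]
      rw [div_le_iff₀ hρ] at *
      calc Δ = (Δ * ρ) * (1/ρ) := by field_simp
        _ ≤ (M * T1) * (1/ρ) := by
            apply mul_le_mul_of_nonneg_right this (by positivity)
        _ = 1/ρ * M * T1 := by ring
    · -- min = s
      have h2α : 2 * α = s := by rw [hα, hmeq]; ring
      rw [h2α]
      calc Δ ≤ B * T1 * s := hD
        _ ≤ M * T1 * s := by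
            apply mul_le_mul_of_nonneg_right _ hs.le
            exact mul_le_mul_of_nonneg_right hM2 hT1.le
        _ = s * M * T1 := by ring
  -- second term
  have hterm2 : 4*K*ρ*α^2*L^2 ≤ 2 * α * M := by
    have h1 : 2*K*ρ*L^2*α ≤ K*ρ*L^2*s := by
      have h2s : 2*α ≤ s := by linarith
      have := mul_le_mul_of_nonneg_left h2s (by positivity : (0:ℝ) ≤ K*ρ*L^2)
      linarith
    have h2 : 2*K*ρ*L^2*α ≤ M := le_trans h1 (le_trans hAle hM2)
    have h3 := mul_le_mul_of_nonneg_left h2 (by positivity : (0:ℝ) ≤ 2*α)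
    have h4 : 2*α*(2*K*ρ*L^2*α) = 4*K*ρ*α^2*L^2 := by ring
    linarith
  have hSle : S ≤ 8 * M * T1 := by
    have h2 : T1 * (4*K*ρ*α^2*L^2) ≤ T1 * (2*α*M) :=
      mul_le_mul_of_nonneg_left hterm2 hT1.le
    have h1 : (α/2) * S ≤ (α/2) * (8 * M * T1) := by
      calc (α/2) * S ≤ Δ + T1 * (4*K*ρ*α^2*L^2) := hsum
        _ ≤ 2*α*M*T1 + T1*(2*α*M) := add_le_add hΔle h2
        _ = (α/2) * (8 * M * T1) := by ring
    exact le_of_mul_le_mul_left h1 (by positivity : (0:ℝ) < α/2)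
  calc (1/T1) * S ≤ (1/T1) * (8 * M * T1) := by
        apply mul_le_mul_of_nonneg_left hSle (by positivity)
    _ = 8 * M := by field_simp
end
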